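/- Let M = {f ∈ B : lim_{n→∞} ‖T_{t(n)} f − f‖ = 0} where t(n) → ∞. Then each T_t maps M onto M: for every f ∈ M and t ≥ 0 there exists g ∈ M with T_t g = f. -/
import Mathlib


open Filter Topology

/-- each `T_t` maps `M = {f : ‖T_{t(n)} f - f‖ → 0}` onto `M`. -/
theorem surjective_on_M
    {B : Type*} [NormedAddCommGroup B] [NormedSpace ℂ B] [CompleteSpace B]
    (T : ℝ → B →L[ℂ] B)
    (hT0 : T 0 = 1)
    (hsem : ∀ s t : ℝ, 0 ≤ s → 0 ≤ t → T (s + t) = (T s).comp (T t))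
    (hcontr : ∀ t : ℝ, 0 ≤ t → ∀ g : B, ‖T t g‖ ≤ ‖g‖)
    (hcont : ∀ f : B, Continuous fun t : ℝ => T t f)
    (t : ℕ → ℝ) (ht0 : 0 ≤ t 0) (htmono : ∀ n, t n + 1 ≤ t (n + 1))
    (ht : Tendsto t atTop atTop)
    (M : Set B)
    (hM : M = {f : B | Tendsto (fun n => ‖T (t n) f - f‖) atTop (𝓝 0)}) :
    ∀ f ∈ M, ∀ s : ℝ, 0 ≤ s → ∃ g ∈ M, T s g = f := by
  subst hM
  intro f hf s hs
  have hmono : Monotone t :=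
    (strictMono_nat_of_lt_succ fun n => lt_of_lt_of_le (lt_add_one _) (htmono n)).monotone
  have htnn : ∀ n, 0 ≤ t n := fun n => le_trans ht0 (hmono (Nat.zero_le n))
  obtain ⟨N₀, hN₀⟩ : ∃ N, ∀ k ≥ N, s ≤ t k :=
    eventually_atTop.1 (ht.eventually_ge_atTop s)
  set G : ℕ → B := fun n => T (t n - s) f with hG
  -- commuting: T (t k) (G n) - G n = T (t n - s) (T (t k) f - f)
  have key2 : ∀ k n, N₀ ≤ n → ‖T (t k) (G n) - G n‖ ≤ ‖T (t k) f - f‖ := by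
    intro k n hn
    have hns : (0:ℝ) ≤ t n - s := by linarith [hN₀ n hn]
    have e1 : T (t k) (G n) = T (t n - s) (T (t k) f) := by
      have h1 := hsem (t k) (t n - s) (htnn k) hns
      have h2 := hsem (t n - s) (t k) hns (htnn k)
      have : (T (t k)).comp (T (t n - s)) = (T (t n - s)).comp (T (t k)) := by
        rw [← h1, ← h2]; ring_nf
      simpa [hG] using congrArg (fun L : B →L[ℂ] B => L f) this
    have e2 : T (t k) (G n) - G n = T (t n - s) (T (t k) f - f) := by
      rw [e1, map_sub]
    rw [e2]
    exact hcontr _ hns _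
  -- Cauchy estimate
  have key1 : ∀ m n, N₀ ≤ n → n ≤ m →
      ‖G m - G n‖ ≤ ‖T (t n) f - f‖ + ‖T (t m) f - f‖ := by
    intro m n hn hnm
    have hns : (0:ℝ) ≤ t n - s := by linarith [hN₀ n hn]
    have hmn : (0:ℝ) ≤ t m - t n := by linarith [hmono hnm]
    have e1 : G m = T (t n - s) (T (t m - t n) f) := by
      have h1 := hsem (t n - s) (t m - t n) hns hmn
      rw [show t n - s + (t m - t n) = t m - s by ring] at h1
      simp [hG, h1]
    have e2 : T (t m - t n) (T (t n) f) = T (t m) f := by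
      have h1 := hsem (t m - t n) (t n) hmn (htnn n)
      rw [show t m - t n + t n = t m by ring] at h1
      simp [h1]
    have e3 : G m - G n = T (t n - s) (T (t m - t n) f - f) := by
      rw [e1, ← map_sub]
    calc ‖G m - G n‖ ≤ ‖T (t m - t n) f - f‖ := by rw [e3]; exact hcontr _ hns _
      _ = ‖T (t m - t n) (f - T (t n) f) + (T (t m) f - f)‖ := by
          rw [map_sub, e2]; congr 1; abel
      _ ≤ ‖T (t m - t n) (f - T (t n) f)‖ + ‖T (t m) f - f‖ := norm_add_le _ _
      _ ≤ ‖f - T (t n) f‖ + ‖T (t m) f - f‖ := by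
          gcongr; exact hcontr _ hmn _
      _ = ‖T (t n) f - f‖ + ‖T (t m) f - f‖ := by rw [norm_sub_rev]
  have hcauchy : CauchySeq G := by
    rw [Metric.cauchySeq_iff]
    intro ε hε
    obtain ⟨N₁, hN₁⟩ : ∃ N, ∀ k ≥ N, ‖T (t k) f - f‖ < ε / 2 := by
      have := hf.eventually_lt_const (show (0:ℝ) < ε / 2 by positivity)
      exact eventually_atTop.1 this
    refine ⟨max N₀ N₁, fun m hm n hn => ?_⟩
    rcases le_total n m with h | h
    · rw [dist_eq_norm]
      calc ‖G m - G n‖ ≤ ‖T (t n) f - f‖ + ‖T (t m) f - f‖ :=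
            key1 m n (le_trans (le_max_left _ _) hn) h
        _ < ε / 2 + ε / 2 := by
            gcongr
            · exact hN₁ n (le_trans (le_max_right _ _) hn)
            · exact hN₁ m (le_trans (le_max_right _ _) hm)
        _ = ε := by ring
    · rw [dist_eq_norm, norm_sub_rev]
      calc ‖G n - G m‖ ≤ ‖T (t m) f - f‖ + ‖T (t n) f - f‖ :=
            key1 n m (le_trans (le_max_left _ _) hm) h
        _ < ε / 2 + ε / 2 := by
            gcongr
            · exact hN₁ m (le_trans (le_max_right _ _) hm)
            · exact hN₁ n (le_trans (le_max_right _ _) hn)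
        _ = ε := by ring
  obtain ⟨g, hg⟩ := cauchySeq_tendsto_of_complete hcauchy
  refine ⟨g, ?_, ?_⟩
  · -- g ∈ M
    rw [Set.mem_setOf_eq, Metric.tendsto_atTop]
    intro ε hε
    obtain ⟨n, hnball, hn0⟩ : ∃ n, dist (G n) g < ε / 3 ∧ N₀ ≤ n :=
      ((hg.eventually (Metric.ball_mem_nhds g (by positivity))).and
        (eventually_ge_atTop N₀)).exists
    obtain ⟨K, hK⟩ : ∃ K, ∀ k ≥ K, ‖T (t k) f - f‖ < ε / 3 :=
      eventually_atTop.1 (hf.eventually_lt_const (show (0:ℝ) < ε / 3 by positivity))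
    refine ⟨K, fun k hk => ?_⟩
    have h1 : ‖T (t k) g - g‖ ≤ ‖T (t k) (g - G n)‖ + ‖T (t k) (G n) - G n‖ + ‖G n - g‖ := by
      have : T (t k) g - g = T (t k) (g - G n) + (T (t k) (G n) - G n) + (G n - g) := by
        rw [map_sub]; abel
      rw [this]
      exact norm_add₃_le
    have h2 : ‖T (t k) (g - G n)‖ ≤ ‖G n - g‖ := by
      calc ‖T (t k) (g - G n)‖ ≤ ‖g - G n‖ := hcontr _ (htnn k) _
        _ = ‖G n - g‖ := norm_sub_rev _ _
    have h3 := key2 k n hn0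
    have h4 : ‖G n - g‖ < ε / 3 := by rwa [dist_eq_norm] at hnball
    have h5 := hK k hk
    rw [Real.dist_eq, sub_zero, abs_of_nonneg (norm_nonneg _)]
    linarith
  · -- T s g = f
    have hTf : Tendsto (fun n => T (t n) f) atTop (𝓝 f) := by
      rw [tendsto_iff_norm_sub_tendsto_zero]
      exact hf
    have hTsG : Tendsto (fun n => T s (G n)) atTop (𝓝 (T s g)) :=
      ((T s).continuous.tendsto g).comp hg
    have heq : ∀ᶠ n in atTop, T s (G n) = T (t n) f := by
      rw [eventually_atTop]
      refine ⟨N₀, fun n hn => ?_⟩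
      have h1 := hsem s (t n - s) hs (by linarith [hN₀ n hn])
      rw [show s + (t n - s) = t n by ring] at h1
      simp [hG, h1]
    exact tendsto_nhds_unique (hTsG.congr' heq) hTf
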